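/- For every c ∈ [−1,1], the real symmetric 4×4 matrix N(c) is negative semidefinite: xᵀ N(c) x ≤ 0 for all x ∈ ℝ⁴. -/
import Mathlib


open Matrix

/-- The matrix `N(c)`: 12h times the interior interface quadratic-form matrix
of the two-point-block BFD scheme for the heat equation. -/
noncomputable def Nmat (c : ℝ) : Matrix (Fin 4) (Fin 4) ℝ :=
  !![8*c-19,      (71-40*c)/3,  8*c-5,        (1-8*c)/3;
     (71-40*c)/3, (56*c-169)/3, (113-40*c)/3, 8*c-5;
     8*c-5,       (113-40*c)/3, (56*c-169)/3, (71-40*c)/3;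
     (1-8*c)/3,   8*c-5,        (71-40*c)/3,  8*c-19]

/-- For every `c ∈ [-1,1]`, `N(c)` is negative semidefinite:
`xᵀ N(c) x ≤ 0` for all `x ∈ ℝ⁴`. -/
theorem Nmat_negSemidef (c : ℝ) (hc : c ∈ Set.Icc (-1 : ℝ) 1) (x : Fin 4 → ℝ) :
    x ⬝ᵥ (Nmat c *ᵥ x) ≤ 0 := by
  obtain ⟨h1, h2⟩ := hc
  have h1c : (0:ℝ) ≤ 1 - c := by linarith
  have h2c : (0:ℝ) ≤ 1 + c := by linarith
  have hpos : (0:ℝ) < 116 - 64*c := by linarith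
  simp [Nmat, Matrix.mulVec, dotProduct, Fin.sum_univ_four,
    Matrix.cons_val_zero, Matrix.cons_val_one, Matrix.head_cons,
    Matrix.cons_val_two, Matrix.tail_cons, Matrix.cons_val_three]
  nlinarith [sq_nonneg ((116-64*c)*(x 0 - x 3) - (172-128*c)*(x 1 - x 2)),
    mul_nonneg h1c (sq_nonneg (x 1 - x 2)),
    mul_nonneg h2c (sq_nonneg (x 1 - x 2)),
    mul_nonneg (mul_nonneg h1c h2c) (sq_nonneg (x 1 - x 2)),
    mul_nonneg (mul_nonneg h1c h1c) (sq_nonneg (x 0 + x 3 - x 1 - x 2)),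
    mul_nonneg h1c (sq_nonneg (x 0 + x 3 - x 1 - x 2)),
    mul_nonneg h2c (sq_nonneg (x 0 + x 3 - x 1 - x 2)),
    hpos, sq_nonneg (x 1 - x 2), sq_nonneg (x 0 + x 3 - x 1 - x 2)]
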